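/- arXiv:1608.04430 — 7 statements merged into one kernel-verified Lean document; each statement's English description precedes it below -/
import Mathlib

section
/- For any vector x ∈ ℝⁿ, the ℓ0 norm of x (the number of nonzero entries) equals the minimum of ‖u‖₁ over all u ∈ ℝⁿ satisfying -1 ≤ u ≤ 1 (componentwise) and ‖x‖₁ = ⟨u, x⟩. Moreover, u* = sign(x) (componentwise, with sign(0)=0) is the unique optimal solution of this minimization problem. -/
open Finset

theorem stmt_0 (n : ℕ) (x : Fin n → ℝ) :
    IsLeast {c : ℝ | ∃ u : Fin n → ℝ, (∀ i, -1 ≤ u i ∧ u i ≤ 1) ∧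
        (∑ i, |x i|) = (∑ i, u i * x i) ∧ c = ∑ i, |u i|}
      ((Finset.univ.filter fun i => x i ≠ 0).card : ℝ) ∧
    (∀ u : Fin n → ℝ, (∀ i, -1 ≤ u i ∧ u i ≤ 1) →
        (∑ i, |x i|) = (∑ i, u i * x i) →
        (∑ i, |u i|) = ((Finset.univ.filter fun i => x i ≠ 0).card : ℝ) →
        u = fun i => Real.sign (x i)) := by
  set S := Finset.univ.filter fun i => x i ≠ 0 with hS
  -- key: for feasible u, each term is tight
  have key : ∀ u : Fin n → ℝ, (∀ i, -1 ≤ u i ∧ u i ≤ 1) →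
      (∑ i, |x i|) = (∑ i, u i * x i) → ∀ i, u i * x i = |x i| := by
    intro u hu hsum i
    have hle : ∀ j ∈ Finset.univ, u j * x j ≤ |x j| := by
      intro j _
      calc u j * x j ≤ |u j * x j| := le_abs_self _
        _ = |u j| * |x j| := abs_mul _ _
        _ ≤ 1 * |x j| := by
            apply mul_le_mul_of_nonneg_right _ (abs_nonneg _)
            exact abs_le.mpr ⟨(hu j).1, (hu j).2⟩
        _ = |x j| := one_mul _
    exact (Finset.sum_eq_sum_iff_of_le hle).mp hsum.symm i (Finset.mem_univ i) |>.symm.symm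
  have usign : ∀ u : Fin n → ℝ, ∀ i, u i * x i = |x i| → x i ≠ 0 →
      u i = Real.sign (x i) := by
    intro u i h hne
    rcases lt_or_gt_of_ne hne with hneg | hpos
    · rw [Real.sign_of_neg hneg]
      have h2 : u i * x i = (-1) * x i := by rw [h, abs_of_neg hneg]; ring
      exact mul_right_cancel₀ hne h2
    · rw [Real.sign_of_pos hpos]
      have : u i * x i = x i := by rw [h, abs_of_pos hpos]
      exact mul_right_cancel₀ hne (by linarith : u i * x i = 1 * x i)
  have sign_abs : ∀ i, |Real.sign (x i)| = if x i ≠ 0 then (1:ℝ) else 0 := by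
    intro i
    rcases lt_trichotomy (x i) 0 with h | h | h
    · rw [Real.sign_of_neg h, if_pos h.ne]; norm_num
    · rw [h, Real.sign_zero]; simp
    · rw [Real.sign_of_pos h, if_pos h.ne']; norm_num
  have sign_sum : (∑ i, |Real.sign (x i)|) = (S.card : ℝ) := by
    have : (S.card : ℝ) = ∑ i, if x i ≠ 0 then (1:ℝ) else 0 := by
      rw [hS, Finset.card_filter]; push_cast; rfl
    rw [this]
    exact Finset.sum_congr rfl fun i _ => sign_abs i
  constructor
  · constructor
    · -- membership: u = sign x
      refine ⟨fun i => Real.sign (x i), fun i => ?_, ?_, sign_sum.symm⟩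
      · dsimp only
        rcases lt_trichotomy (x i) 0 with h | h | h
        · rw [Real.sign_of_neg h]; norm_num
        · rw [h, Real.sign_zero]; norm_num
        · rw [Real.sign_of_pos h]; norm_num
      · refine Finset.sum_congr rfl fun i _ => ?_
        dsimp only
        rcases lt_trichotomy (x i) 0 with h | h | h
        · rw [Real.sign_of_neg h, abs_of_neg h]; ring
        · rw [h, Real.sign_zero]; simp
        · rw [Real.sign_of_pos h, abs_of_pos h]; ring
    · -- lower bound
      rintro c ⟨u, hu, hsum, rfl⟩
      have htight := key u hu hsum
      have h1 : ∀ i ∈ S, (1:ℝ) ≤ |u i| := by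
        intro i hi
        have hne : x i ≠ 0 := (Finset.mem_filter.mp hi).2
        rw [usign u i (htight i) hne, sign_abs i, if_pos hne]
      calc (S.card : ℝ) = ∑ _i ∈ S, (1:ℝ) := by simp
        _ ≤ ∑ i ∈ S, |u i| := Finset.sum_le_sum h1
        _ ≤ ∑ i, |u i| := Finset.sum_le_sum_of_subset_of_nonneg (Finset.subset_univ S)
            (fun i _ _ => abs_nonneg _)
  · -- uniqueness
    intro u hu hsum hcard
    have htight := key u hu hsum
    funext i
    by_cases hne : x i ≠ 0
    · exact usign u i (htight i) hne
    · push_neg at hne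
      simp only [hne, Real.sign_zero]
      -- show u i = 0 : on S all |u j| = 1, total = card, so off S sum is 0
      have hone : ∀ j ∈ S, |u j| = 1 := by
        intro j hj
        have hne' : x j ≠ 0 := (Finset.mem_filter.mp hj).2
        rw [usign u j (htight j) hne', sign_abs j, if_pos hne']
      have hsplit : (∑ j ∈ S, |u j|) + (∑ j ∈ Finset.univ.filter (fun j => ¬ x j ≠ 0), |u j|)
          = ∑ j, |u j| := by
        rw [hS]; exact Finset.sum_filter_add_sum_filter_not _ _ _
      have hSsum : (∑ j ∈ S, |u j|) = (S.card : ℝ) := by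
        rw [Finset.sum_congr rfl hone]; simp
      have hzero : (∑ j ∈ Finset.univ.filter (fun j => ¬ x j ≠ 0), |u j|) = 0 := by
        have := hsplit
        rw [hSsum, hcard] at this
        linarith
      have := (Finset.sum_eq_zero_iff_of_nonneg (fun j _ => abs_nonneg (u j))).mp hzero i
        (Finset.mem_filter.mpr ⟨Finset.mem_univ i, by simp [hne]⟩)
      exact abs_eq_zero.mp this
end

section
/- For any vector x ∈ ℝⁿ, the ℓ0 norm of x equals the minimum of ⟨1, 1 - v⟩ over all v ∈ ℝⁿ satisfying 0 ≤ v ≤ 1 (componentwise) and v ⊙ |x| = 0 (componentwise product), and v* = 1 - sign(|x|) is the unique optimal solution. -/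
open Finset

lemma key_split (n : ℕ) (x v : Fin n → ℝ) (hv0 : ∀ i, v i * |x i| = 0) :
    ∑ i, (1 - v i) = ((Finset.univ.filter fun i => x i ≠ 0).card : ℝ)
      + ∑ i ∈ Finset.univ.filter (fun i => x i = 0), (1 - v i) := by
  rw [← Finset.sum_filter_add_sum_filter_not Finset.univ (fun i => x i ≠ 0) (fun i => 1 - v i)]
  congr 1
  · rw [Finset.sum_congr rfl (fun i hi => ?_), Finset.sum_const, nsmul_eq_mul, mul_one]
    have hx : x i ≠ 0 := (Finset.mem_filter.mp hi).2
    have hvz : v i = 0 := by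
      rcases mul_eq_zero.mp (hv0 i) with h | h
      · exact h
      · exact absurd (abs_eq_zero.mp h) hx
    simp [hvz]
  · apply Finset.sum_congr
    · ext i; simp
    · intros; rfl

theorem stmt_1 (n : ℕ) (x : Fin n → ℝ) :
    IsLeast {c : ℝ | ∃ v : Fin n → ℝ, (∀ i, 0 ≤ v i ∧ v i ≤ 1) ∧
        (∀ i, v i * |x i| = 0) ∧ c = ∑ i, (1 - v i)}
      ((Finset.univ.filter fun i => x i ≠ 0).card : ℝ) ∧
    (∀ v : Fin n → ℝ, (∀ i, 0 ≤ v i ∧ v i ≤ 1) →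
        (∀ i, v i * |x i| = 0) →
        (∑ i, (1 - v i)) = ((Finset.univ.filter fun i => x i ≠ 0).card : ℝ) →
        v = fun i => 1 - Real.sign |x i|) := by
  constructor
  · constructor
    · refine ⟨fun i => if x i = 0 then 1 else 0, fun i => ?_, fun i => ?_, ?_⟩
      · by_cases h : x i = 0 <;> simp [h]
      · by_cases h : x i = 0 <;> simp [h]
      · rw [key_split n x _ (fun i => by by_cases h : x i = 0 <;> simp [h])]
        rw [Finset.sum_congr rfl (fun i hi => ?_), Finset.sum_const_zero, add_zero]
        have hx : x i = 0 := (Finset.mem_filter.mp hi).2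
        simp [hx]
    · rintro c ⟨v, hv1, hv0, rfl⟩
      rw [key_split n x v hv0]
      have : (0:ℝ) ≤ ∑ i ∈ Finset.univ.filter (fun i => x i = 0), (1 - v i) :=
        Finset.sum_nonneg (fun i _ => by linarith [(hv1 i).2])
      linarith
  · intro v hv1 hv0 hsum
    rw [key_split n x v hv0] at hsum
    have hz : ∑ i ∈ Finset.univ.filter (fun i => x i = 0), (1 - v i) = 0 := by linarith
    have hall := (Finset.sum_eq_zero_iff_of_nonneg
      (fun i _ => by linarith [(hv1 i).2])).mp hz
    funext i
    by_cases h : x i = 0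
    · have := hall i (Finset.mem_filter.mpr ⟨Finset.mem_univ i, h⟩)
      simp [h, Real.sign_zero]
      linarith
    · have hvz : v i = 0 := by
        rcases mul_eq_zero.mp (hv0 i) with h' | h'
        · exact h'
        · exact absurd (abs_eq_zero.mp h') h
      have : Real.sign |x i| = 1 := Real.sign_of_pos (abs_pos.mpr h)
      simp [hvz, this]
end

section
/- Fix z ∈ ℝᵐ and k > 0. Let ū be a minimizer of ½‖u - |z|‖₂² over the set {u ∈ ℝᵐ : 0 ≤ u ≤ 1, ⟨u, 1⟩ ≤ k}. Then u* = sign(z) ⊙ ū is a minimizer of ½‖u - z‖₂² over the set {u ∈ ℝᵐ : -1 ≤ u ≤ 1, ‖u‖₁ ≤ k}, and the two minimal objective values are equal. -/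
/-!
A vector `u` in the box `[-1, 1]ᵐ` with `‖u‖₁ ≤ k` can be replaced by `|u|`, which lies in the
capped simplex `{0 ≤ u ≤ 1, ∑ u ≤ k}` and satisfies `(|uᵢ| - |zᵢ|)² ≤ (uᵢ - zᵢ)²`; so the minimum
of the signed problem is at least that of the unsigned one. Conversely `sign(z) ⊙ ū` is feasible
and attains the same value, because a minimizer `ū` vanishes wherever `z` does (setting such a
coordinate to `0` stays feasible and strictly lowers the objective otherwise).
-/

open Finset

namespace Real

theorem sign_mul_sub_sq_eq {u z : ℝ} (h : z = 0 → u = 0) :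
    (sign z * u - z) ^ 2 = (u - |z|) ^ 2 := by
  rcases lt_trichotomy z 0 with hz | rfl | hz
  · rw [sign_of_neg hz, abs_of_neg hz]; ring
  · simp [h rfl]
  · rw [sign_of_pos hz, abs_of_pos hz]; ring

theorem abs_sign_mul_eq {u z : ℝ} (hu : 0 ≤ u) (h : z = 0 → u = 0) :
    |sign z * u| = u := by
  rcases eq_or_ne z 0 with rfl | hz
  · simp [h rfl]
  · rcases sign_apply_eq_of_ne_zero z hz with hs | hs <;> simp [hs, abs_of_nonneg hu]

end Real

theorem sq_abs_sub_abs_le (a b : ℝ) : (|a| - |b|) ^ 2 ≤ (a - b) ^ 2 :=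
  sq_le_sq.mpr (by simpa using abs_abs_sub_abs_le_abs_sub a b)

theorem cappedSimplex_minimizer_eq_zero {ι : Type*} [Fintype ι] [DecidableEq ι]
    (c ubar : ι → ℝ) (k : ℝ)
    (hmem : (∀ i, 0 ≤ ubar i ∧ ubar i ≤ 1) ∧ (∑ i, ubar i) ≤ k)
    (hmin : ∀ u : ι → ℝ, (∀ i, 0 ≤ u i ∧ u i ≤ 1) → (∑ i, u i) ≤ k →
        (∑ i, (ubar i - c i) ^ 2) ≤ ∑ i, (u i - c i) ^ 2)
    {i : ι} (hc : c i = 0) : ubar i = 0 := by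
  by_contra hne
  set v := Function.update ubar i 0
  have hv_le : ∀ j, v j ≤ ubar j := fun j => by
    rcases eq_or_ne j i with rfl | hj
    · simpa [v] using (hmem.1 j).1
    · simp [v, hj]
  have hv_box : ∀ j, 0 ≤ v j ∧ v j ≤ 1 := fun j => by
    rcases eq_or_ne j i with rfl | hj
    · simp [v]
    · simpa [v, hj] using hmem.1 j
  have hv_sum : (∑ j, v j) ≤ k := (sum_le_sum fun j _ => hv_le j).trans hmem.2
  have hlt : ∑ j, (v j - c j) ^ 2 < ∑ j, (ubar j - c j) ^ 2 := by
    refine sum_lt_sum (fun j _ => ?_) ⟨i, mem_univ i, by simpa [v, hc] using sq_pos_of_ne_zero hne⟩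
    rcases eq_or_ne j i with rfl | hj
    · simp [v, hc, sq_nonneg]
    · simp [v, hj]
  exact (hmin v hv_box hv_sum).not_gt hlt

theorem stmt_9_general (m : ℕ) (z : Fin m → ℝ) (k : ℝ) (ubar : Fin m → ℝ)
    (hmem : (∀ i, 0 ≤ ubar i ∧ ubar i ≤ 1) ∧ (∑ i, ubar i) ≤ k)
    (hmin : ∀ u : Fin m → ℝ, (∀ i, 0 ≤ u i ∧ u i ≤ 1) → (∑ i, u i) ≤ k →
        (1 / 2) * (∑ i, (ubar i - |z i|) ^ 2) ≤ (1 / 2) * ∑ i, (u i - |z i|) ^ 2) :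
    (∀ i, -1 ≤ Real.sign (z i) * ubar i ∧ Real.sign (z i) * ubar i ≤ 1) ∧
    (∑ i, |Real.sign (z i) * ubar i|) ≤ k ∧
    (∀ u : Fin m → ℝ, (∀ i, -1 ≤ u i ∧ u i ≤ 1) → (∑ i, |u i|) ≤ k →
        (1 / 2) * (∑ i, (Real.sign (z i) * ubar i - z i) ^ 2) ≤
          (1 / 2) * ∑ i, (u i - z i) ^ 2) ∧
    (1 / 2) * (∑ i, (Real.sign (z i) * ubar i - z i) ^ 2) =
      (1 / 2) * ∑ i, (ubar i - |z i|) ^ 2 := by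
  have hmin' : ∀ u : Fin m → ℝ, (∀ i, 0 ≤ u i ∧ u i ≤ 1) → (∑ i, u i) ≤ k →
      (∑ i, (ubar i - |z i|) ^ 2) ≤ ∑ i, (u i - |z i|) ^ 2 :=
    fun u hu hs => by linarith [hmin u hu hs]
  have hvanish : ∀ i, z i = 0 → ubar i = 0 := fun i hz =>
    cappedSimplex_minimizer_eq_zero (fun j => |z j|) ubar k hmem hmin' (by simp [hz])
  have habs : ∀ i, |Real.sign (z i) * ubar i| = ubar i := fun i =>
    Real.abs_sign_mul_eq (hmem.1 i).1 (hvanish i)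
  have hval : ∑ i, (Real.sign (z i) * ubar i - z i) ^ 2 = ∑ i, (ubar i - |z i|) ^ 2 :=
    sum_congr rfl fun i _ => Real.sign_mul_sub_sq_eq (hvanish i)
  refine ⟨fun i => abs_le.mp ((habs i).trans_le (hmem.1 i).2), ?_, fun u hu hs => ?_,
    by rw [hval]⟩
  · simpa only [habs] using hmem.2
  · have hu_abs : ∀ i, 0 ≤ |u i| ∧ |u i| ≤ 1 := fun i => ⟨abs_nonneg _, abs_le.mpr (hu i)⟩
    have := hmin' (fun i => |u i|) hu_abs hs
    have := sum_le_sum fun i (_ : i ∈ univ) => sq_abs_sub_abs_le (u i) (z i)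
    rw [hval]
    linarith

theorem stmt_9 (m : ℕ) (z : Fin m → ℝ) (k : ℝ) (hk : 0 < k) (ubar : Fin m → ℝ)
    (hmem : (∀ i, 0 ≤ ubar i ∧ ubar i ≤ 1) ∧ (∑ i, ubar i) ≤ k)
    (hmin : ∀ u : Fin m → ℝ, (∀ i, 0 ≤ u i ∧ u i ≤ 1) → (∑ i, u i) ≤ k →
        (1 / 2) * (∑ i, (ubar i - |z i|) ^ 2) ≤ (1 / 2) * ∑ i, (u i - |z i|) ^ 2) :
    (∀ i, -1 ≤ Real.sign (z i) * ubar i ∧ Real.sign (z i) * ubar i ≤ 1) ∧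
    (∑ i, |Real.sign (z i) * ubar i|) ≤ k ∧
    (∀ u : Fin m → ℝ, (∀ i, -1 ≤ u i ∧ u i ≤ 1) → (∑ i, |u i|) ≤ k →
        (1 / 2) * (∑ i, (Real.sign (z i) * ubar i - z i) ^ 2) ≤
          (1 / 2) * ∑ i, (u i - z i) ^ 2) ∧
    (1 / 2) * (∑ i, (Real.sign (z i) * ubar i - z i) ^ 2) =
      (1 / 2) * ∑ i, (ubar i - |z i|) ^ 2 :=
  stmt_9_general m z k ubar hmem hmin
end

section
/- Let h : ℝⁿ → ℝ be convex and L-Lipschitz continuous, let A ∈ ℝ^{m×n} have rank m with smallest singular value σ(A) > 0, and let w ∈ ℝᵐ be nonnegative. Suppose x* minimizes h(x) + ⟨w, |Ax|⟩ over ℝⁿ. Then for every index i with wᵢ > L/σ(A), we have (Ax*)ᵢ = 0. -/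
open Finset

open Matrix

theorem stmt_11 (m n : ℕ) (h : (Fin n → ℝ) → ℝ) (L : ℝ)
    (hconv : ConvexOn ℝ Set.univ h)
    (hlip : ∀ x y : Fin n → ℝ, |h x - h y| ≤ L * Real.sqrt (∑ i, (x i - y i) ^ 2))
    (A : Matrix (Fin m) (Fin n) ℝ) (hrank : A.rank = m)
    (σ : ℝ) (hσpos : 0 < σ)
    (hσ : IsGLB {r : ℝ | ∃ c : Fin m → ℝ, (∑ i, (c i) ^ 2) = 1 ∧
        r = Real.sqrt (∑ j, (A.transpose.mulVec c j) ^ 2)} σ)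
    (w : Fin m → ℝ) (hw : ∀ i, 0 ≤ w i)
    (xstar : Fin n → ℝ)
    (hmin : ∀ x : Fin n → ℝ,
        h xstar + (∑ i, w i * |A.mulVec xstar i|) ≤ h x + ∑ i, w i * |A.mulVec x i|) :
    ∀ i, L / σ < w i → A.mulVec xstar i = 0 := by
  intro i hwi
  by_contra ht
  set t := A.mulVec xstar i with htdef
  have htpos : 0 < |t| := abs_pos.mpr ht
  -- n is positive
  have hmpos : 0 < m := i.pos
  have hnpos : 0 < n := by
    have := A.rank_le_card_width
    simp only [Fintype.card_fin] at this
    omega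
  -- L ≥ 0
  have hL : 0 ≤ L := by
    have h1 := hlip (Pi.single ⟨0, hnpos⟩ (1 : ℝ) : Fin n → ℝ) 0
    have h2 : ∑ j, ((Pi.single ⟨0, hnpos⟩ (1:ℝ) : Fin n → ℝ) j - (0 : Fin n → ℝ) j) ^ 2 = 1 := by
      simp only [Pi.zero_apply, sub_zero]
      rw [Finset.sum_eq_single ⟨0, hnpos⟩]
      · simp
      · intro b _ hb; rw [Pi.single_eq_of_ne hb]; ring
      · simp
    rw [h2, Real.sqrt_one, mul_one] at h1
    exact le_trans (abs_nonneg _) h1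
  -- full rank of A * Aᵀ, get c
  have hMr : (A * Aᵀ).rank = m := by rw [Matrix.rank_self_mul_transpose, hrank]
  have hsurj : Function.Surjective (A * Aᵀ).mulVec := by
    have h1 : LinearMap.range (A * Aᵀ).mulVecLin = ⊤ := by
      apply Submodule.eq_top_of_finrank_eq
      rw [← Matrix.rank, hMr]
      simp [Module.finrank_pi]
    intro b
    exact (LinearMap.range_eq_top.mp h1) b
  obtain ⟨c, hc⟩ := hsurj (Pi.single i (-t))
  set d := Aᵀ.mulVec c with hddef
  have hAd : A.mulVec d = Pi.single i (-t) := by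
    rw [hddef, Matrix.mulVec_mulVec, hc]
  -- ∑ d² = c i * (-t)
  have hdot : ∑ j, d j ^ 2 = c i * (-t) := by
    have h1 : c ⬝ᵥ (A.mulVec d) = d ⬝ᵥ d := by
      rw [Matrix.dotProduct_mulVec, ← Matrix.mulVec_transpose, ← hddef]
    rw [hAd, dotProduct_single] at h1
    rw [h1]
    simp [dotProduct, sq]
  set D := Real.sqrt (∑ j, d j ^ 2) with hDdef
  set C := Real.sqrt (∑ j, c j ^ 2) with hCdef
  have hsd : 0 ≤ ∑ j, d j ^ 2 := Finset.sum_nonneg fun j _ => sq_nonneg _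
  have hsc : 0 ≤ ∑ j, c j ^ 2 := Finset.sum_nonneg fun j _ => sq_nonneg _
  have hD2 : D ^ 2 = ∑ j, d j ^ 2 := Real.sq_sqrt hsd
  have hC2 : C ^ 2 = ∑ j, c j ^ 2 := Real.sq_sqrt hsc
  -- c ≠ 0
  have hscpos : 0 < ∑ j, c j ^ 2 := by
    rcases hsc.lt_or_eq with h' | h'
    · exact h'
    · exfalso
      have hc0 : c = 0 := by
        funext j
        have := (Finset.sum_eq_zero_iff_of_nonneg
          (fun j _ => sq_nonneg (c j))).mp h'.symm j (Finset.mem_univ j)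
        exact pow_eq_zero_iff (by norm_num) |>.mp this
      have hd0 : d = 0 := by rw [hddef, hc0]; simp
      have h2 : (Pi.single i (-t) : Fin m → ℝ) i = 0 := by
        rw [← hAd, hd0]; simp
      simp at h2
      exact ht h2
  have hCpos : 0 < C := Real.sqrt_pos.mpr hscpos
  -- σ * C ≤ D
  have hσCD : σ * C ≤ D := by
    have hmem : C⁻¹ * D ∈ {r : ℝ | ∃ c : Fin m → ℝ, (∑ i, (c i) ^ 2) = 1 ∧
        r = Real.sqrt (∑ j, (A.transpose.mulVec c j) ^ 2)} := by
      refine ⟨C⁻¹ • c, ?_, ?_⟩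
      · have : ∑ j, (C⁻¹ • c) j ^ 2 = C⁻¹ ^ 2 * ∑ j, c j ^ 2 := by
          rw [Finset.mul_sum]; congr 1; funext j; simp [mul_pow]
        rw [this, ← hC2]
        field_simp
      · have h1 : Aᵀ.mulVec (C⁻¹ • c) = C⁻¹ • d := by
          rw [hddef, Matrix.mulVec_smul]
        rw [h1]
        have : ∑ j, (C⁻¹ • d) j ^ 2 = C⁻¹ ^ 2 * ∑ j, d j ^ 2 := by
          rw [Finset.mul_sum]; congr 1; funext j; simp [mul_pow]
        rw [this, Real.sqrt_mul (sq_nonneg _), Real.sqrt_sq (by positivity)]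
    have := hσ.1 hmem
    calc σ * C ≤ (C⁻¹ * D) * C := by nlinarith
    _ = D := by field_simp
  have hDpos : 0 < D := lt_of_lt_of_le (by positivity) hσCD
  -- |c i| ≤ C
  have hciC : |c i| ≤ C := by
    rw [hCdef, ← Real.sqrt_sq_eq_abs]
    apply Real.sqrt_le_sqrt
    exact Finset.single_le_sum (fun j _ => sq_nonneg (c j)) (Finset.mem_univ i)
  -- D ≤ |t| / σ  (in form σ * D ≤ |t|)
  have hDt : σ * D ≤ |t| := by
    have h1 : D ^ 2 ≤ C * |t| := by
      rw [hD2, hdot]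
      calc c i * (-t) ≤ |c i * (-t)| := le_abs_self _
        _ = |c i| * |t| := by rw [abs_mul, abs_neg]
        _ ≤ C * |t| := by nlinarith
    nlinarith
  -- the perturbed point
  have hAx : A.mulVec (xstar + d) = fun j => A.mulVec xstar j + (Pi.single i (-t) : Fin m → ℝ) j := by
    rw [Matrix.mulVec_add, hAd]; rfl
  have hsum : ∑ j, w j * |A.mulVec (xstar + d) j|
      = (∑ j, w j * |A.mulVec xstar j|) - w i * |t| := by
    have hterm : ∀ j, w j * |A.mulVec (xstar + d) j|
        = w j * |A.mulVec xstar j| - (if j = i then w i * |t| else 0) := by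
      intro j
      rw [hAx]
      by_cases hj : j = i
      · subst hj
        simp [htdef]
      · simp only [Pi.single_eq_of_ne hj, add_zero, if_neg hj, sub_zero]
    rw [Finset.sum_congr rfl (fun j _ => hterm j), Finset.sum_sub_distrib,
      Finset.sum_ite_eq' Finset.univ i (fun _ => w i * |t|)]
    simp
  -- h difference bound
  have hhd : |h (xstar + d) - h xstar| ≤ L * D := by
    have h1 := hlip (xstar + d) xstar
    have h2 : ∑ j, ((xstar + d) j - xstar j) ^ 2 = ∑ j, d j ^ 2 := by
      congr 1; funext j; simp
    rwa [h2, ← hDdef] at h1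
  -- contradiction from minimality
  have hm := hmin (xstar + d)
  rw [hsum] at hm
  have hLD : L * D ≤ (L / σ) * |t| := by
    rw [div_mul_eq_mul_div, le_div_iff₀ hσpos]
    nlinarith
  have : w i * |t| < w i * |t| := by
    calc w i * |t| ≤ h (xstar + d) - h xstar := by linarith
    _ ≤ |h (xstar + d) - h xstar| := le_abs_self _
    _ ≤ L * D := hhd
    _ ≤ (L / σ) * |t| := hLD
    _ < w i * |t| := by nlinarith
  exact absurd this (lt_irrefl _)
end

section
/- For any real square matrix X of size n×n, rank(X) equals the minimum of ‖U‖_* over all matrices U ∈ ℝ^{n×n} with operator norm ‖U‖ ≤ 1 satisfying ‖X‖_* = ⟨X, U⟩, where ‖·‖_* denotes the nuclear norm (sum of singular values) and ⟨X,U⟩ = tr(XᵀU). -/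
open Finset

noncomputable def opNorm {n : ℕ} (U : Matrix (Fin n) (Fin n) ℝ) : ℝ :=
  sSup {r : ℝ | ∃ v : Fin n → ℝ, (∑ i, (v i) ^ 2) ≤ 1 ∧
    r = Real.sqrt (∑ i, (U.mulVec v i) ^ 2)}

noncomputable def nucNorm {n : ℕ} (U : Matrix (Fin n) (Fin n) ℝ) : ℝ :=
  sSup {r : ℝ | ∃ W : Matrix (Fin n) (Fin n) ℝ, opNorm W ≤ 1 ∧
    r = (U.transpose * W).trace}

namespace SVDAux


variable {n : ℕ}

lemma sum_sq_mulVec_le (W : Matrix (Fin n) (Fin n) ℝ) (v : Fin n → ℝ) :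
    ∑ i, (W.mulVec v i) ^ 2 ≤ (∑ i, ∑ j, (W i j) ^ 2) * (∑ j, (v j) ^ 2) := by
  rw [Finset.sum_mul]
  refine Finset.sum_le_sum fun i _ => ?_
  simpa [Matrix.mulVec, dotProduct] using
    Finset.sum_mul_sq_le_sq_mul_sq univ (W i) v

lemma opNorm_set_bddAbove (W : Matrix (Fin n) (Fin n) ℝ) :
    BddAbove {r : ℝ | ∃ v : Fin n → ℝ, (∑ i, (v i) ^ 2) ≤ 1 ∧
      r = Real.sqrt (∑ i, (W.mulVec v i) ^ 2)} := by
  refine ⟨Real.sqrt (∑ i, ∑ j, (W i j) ^ 2), ?_⟩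
  rintro r ⟨v, hv, rfl⟩
  apply Real.sqrt_le_sqrt
  calc ∑ i, (W.mulVec v i) ^ 2 ≤ (∑ i, ∑ j, (W i j) ^ 2) * (∑ j, (v j) ^ 2) :=
        sum_sq_mulVec_le W v
    _ ≤ (∑ i, ∑ j, (W i j) ^ 2) * 1 := by
        refine mul_le_mul_of_nonneg_left hv ?_
        positivity
    _ = _ := mul_one _

lemma sum_sq_le_one_of_opNorm {W : Matrix (Fin n) (Fin n) ℝ} (hW : opNorm W ≤ 1)
    {v : Fin n → ℝ} (hv : (∑ i, (v i) ^ 2) ≤ 1) :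
    ∑ i, (W.mulVec v i) ^ 2 ≤ 1 := by
  have hmem : Real.sqrt (∑ i, (W.mulVec v i) ^ 2) ∈
      {r : ℝ | ∃ v : Fin n → ℝ, (∑ i, (v i) ^ 2) ≤ 1 ∧
        r = Real.sqrt (∑ i, (W.mulVec v i) ^ 2)} := ⟨v, hv, rfl⟩
  have h1 : Real.sqrt (∑ i, (W.mulVec v i) ^ 2) ≤ 1 :=
    le_trans (le_csSup (opNorm_set_bddAbove W) hmem) hW
  have h2 : (0:ℝ) ≤ ∑ i, (W.mulVec v i) ^ 2 := by positivity
  nlinarith [Real.sq_sqrt h2, Real.sqrt_nonneg (∑ i, (W.mulVec v i) ^ 2)]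

lemma opNorm_le_one {W : Matrix (Fin n) (Fin n) ℝ}
    (h : ∀ v : Fin n → ℝ, (∑ i, (v i) ^ 2) ≤ 1 → ∑ i, (W.mulVec v i) ^ 2 ≤ 1) :
    opNorm W ≤ 1 := by
  refine Real.sSup_le ?_ zero_le_one
  rintro r ⟨v, hv, rfl⟩
  rw [show (1:ℝ) = Real.sqrt 1 by simp]
  exact Real.sqrt_le_sqrt (h v hv)

lemma pairing_le_one {W : Matrix (Fin n) (Fin n) ℝ} (hW : opNorm W ≤ 1)
    {u v : Fin n → ℝ} (hu : (∑ i, (u i) ^ 2) ≤ 1) (hv : (∑ i, (v i) ^ 2) ≤ 1) :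
    dotProduct u (W.mulVec v) ≤ 1 := by
  have hcs := Finset.sum_mul_sq_le_sq_mul_sq univ u (W.mulVec v)
  have h2 := sum_sq_le_one_of_opNorm hW hv
  have hu0 : (0:ℝ) ≤ ∑ i, (u i) ^ 2 := by positivity
  have : (dotProduct u (W.mulVec v)) ^ 2 ≤ 1 := by
    simp only [dotProduct]
    nlinarith
  nlinarith

lemma trace_eq_sum (A W : Matrix (Fin n) (Fin n) ℝ) :
    (A.transpose * W).trace = ∑ j, ∑ k, A j k * W j k := by
  rw [Matrix.trace]
  simp only [Matrix.diag, Matrix.mul_apply, Matrix.transpose_apply]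
  exact Finset.sum_comm

lemma single_sum_sq (j : Fin n) : (∑ i, ((Pi.single j 1 : Fin n → ℝ) i) ^ 2) ≤ 1 := by
  rw [Finset.sum_eq_single j]
  · simp
  · intro b _ hb; simp [Pi.single_apply, hb]
  · simp

lemma entry_le_one {W : Matrix (Fin n) (Fin n) ℝ} (hW : opNorm W ≤ 1) (j k : Fin n) :
    |W j k| ≤ 1 := by
  have h1 : dotProduct (Pi.single j 1) (W.mulVec (Pi.single k 1)) ≤ 1 :=
    pairing_le_one hW (single_sum_sq j) (single_sum_sq k)
  have h2 : dotProduct (Pi.single j 1) (W.mulVec (-Pi.single k 1)) ≤ 1 :=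
    pairing_le_one hW (single_sum_sq j) (by simpa using single_sum_sq k)
  have e1 : dotProduct (Pi.single j 1) (W.mulVec (Pi.single k 1)) = W j k := by
    simp [Matrix.mulVec_single, dotProduct_single]
  have e2 : dotProduct (Pi.single j 1) (W.mulVec (-Pi.single k 1)) = -(W j k) := by
    simp [Matrix.mulVec_single, dotProduct_single, Matrix.mulVec_neg]
  rw [abs_le]
  constructor
  · rw [e2] at h2; linarith
  · rw [e1] at h1; exact h1

lemma nucNorm_set_bddAbove (A : Matrix (Fin n) (Fin n) ℝ) :
    BddAbove {r : ℝ | ∃ W : Matrix (Fin n) (Fin n) ℝ, opNorm W ≤ 1 ∧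
      r = (A.transpose * W).trace} := by
  refine ⟨∑ j, ∑ k, |A j k|, ?_⟩
  rintro r ⟨W, hW, rfl⟩
  rw [trace_eq_sum]
  refine Finset.sum_le_sum fun j _ => Finset.sum_le_sum fun k _ => ?_
  calc A j k * W j k ≤ |A j k * W j k| := le_abs_self _
    _ = |A j k| * |W j k| := abs_mul _ _
    _ ≤ |A j k| * 1 := mul_le_mul_of_nonneg_left (entry_le_one hW j k) (abs_nonneg _)
    _ = |A j k| := mul_one _

lemma le_nucNorm (A : Matrix (Fin n) (Fin n) ℝ) {W : Matrix (Fin n) (Fin n) ℝ}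
    (hW : opNorm W ≤ 1) : (A.transpose * W).trace ≤ nucNorm A :=
  le_csSup (nucNorm_set_bddAbove A) ⟨W, hW, rfl⟩

lemma nucNorm_le (A : Matrix (Fin n) (Fin n) ℝ) {c : ℝ} (hc : 0 ≤ c)
    (h : ∀ W : Matrix (Fin n) (Fin n) ℝ, opNorm W ≤ 1 → (A.transpose * W).trace ≤ c) :
    nucNorm A ≤ c := by
  refine Real.sSup_le ?_ hc
  rintro r ⟨W, hW, rfl⟩
  exact h W hW


structure SVDData (n : ℕ) (X : Matrix (Fin n) (Fin n) ℝ) where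
  μ : Fin n → ℝ
  q : Fin n → Fin n → ℝ
  hμ : ∀ i, 0 ≤ μ i
  hq : ∀ i j, dotProduct (q i) (q j) = if i = j then 1 else 0
  hAq : ∀ i, (X.transpose * X).mulVec (q i) = μ i • q i
  hPar : ∀ v : Fin n → ℝ, ∑ i, (dotProduct (q i) v) ^ 2 = ∑ i, (v i) ^ 2
  hexp : ∀ j k, X j k = ∑ i, (X.mulVec (q i)) j * q i k
  hrank : X.rank = Fintype.card {i // μ i ≠ 0}

lemma exists_svdData (n : ℕ) (X : Matrix (Fin n) (Fin n) ℝ) : Nonempty (SVDData n X) := by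
  have hct : X.conjTranspose = X.transpose := by
    ext i j; simp [Matrix.conjTranspose_apply]
  have hPSD : (X.transpose * X).PosSemidef := by
    rw [← hct]; exact Matrix.posSemidef_conjTranspose_mul_self X
  have hA : (X.transpose * X).IsHermitian := hPSD.1
  set Q : Matrix (Fin n) (Fin n) ℝ := (hA.eigenvectorUnitary : Matrix (Fin n) (Fin n) ℝ) with hQdef
  have hstar : star Q = Q.transpose := by
    ext i j; simp [Matrix.star_eq_conjTranspose, Matrix.conjTranspose_apply]
  have h1 : Q.transpose * Q = 1 := by
    rw [← hstar]; exact Matrix.mem_unitaryGroup_iff'.mp hA.eigenvectorUnitary.2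
  have h2 : Q * Q.transpose = 1 := by
    rw [← hstar]; exact Matrix.mem_unitaryGroup_iff.mp hA.eigenvectorUnitary.2
  set q : Fin n → Fin n → ℝ := fun i k => Q k i with hqdef
  have hqb : ∀ i, q i = ⇑(hA.eigenvectorBasis i) := by
    intro i; funext k
    simp [hqdef, hQdef, Matrix.IsHermitian.eigenvectorUnitary_apply]
  refine ⟨⟨hA.eigenvalues, q, hPSD.eigenvalues_nonneg, ?_, ?_, ?_, ?_, ?_⟩⟩
  · intro i j
    have := congrFun (congrFun h1 i) j
    simpa [Matrix.mul_apply, Matrix.one_apply, dotProduct, Matrix.transpose_apply,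
      hqdef] using this
  · intro i
    rw [hqb i]; exact hA.mulVec_eigenvectorBasis i
  · intro v
    have key : dotProduct (Q.transpose.mulVec v) (Q.transpose.mulVec v) =
        dotProduct v v := by
      rw [Matrix.dotProduct_mulVec, Matrix.vecMul_transpose, Matrix.mulVec_mulVec, h2,
        Matrix.one_mulVec]
    have e : ∀ i, dotProduct (q i) v = Q.transpose.mulVec v i := by
      intro i; simp [Matrix.mulVec, dotProduct, hqdef, Matrix.transpose_apply]
    calc ∑ i, (dotProduct (q i) v) ^ 2 = ∑ i, (Q.transpose.mulVec v i) ^ 2 := by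
          simp_rw [e]
      _ = dotProduct (Q.transpose.mulVec v) (Q.transpose.mulVec v) := by
          simp [dotProduct, sq]
      _ = ∑ i, (v i) ^ 2 := by rw [key]; simp [dotProduct, sq]
  · intro j k
    have : X = X * (Q * Q.transpose) := by rw [h2, mul_one]
    calc X j k = (X * (Q * Q.transpose)) j k := by rw [← this]
      _ = ∑ i, ∑ m, X j m * Q m i * Q k i := by
          simp only [Matrix.mul_apply, Matrix.transpose_apply, Finset.mul_sum]
          rw [Finset.sum_comm]
          refine Finset.sum_congr rfl fun i _ => Finset.sum_congr rfl fun m _ => by ring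
      _ = ∑ i, (X.mulVec (q i)) j * q i k := by
          refine Finset.sum_congr rfl fun i _ => ?_
          simp [Matrix.mulVec, dotProduct, hqdef, Finset.sum_mul]
  · rw [← Matrix.rank_transpose_mul_self X]
    exact hA.rank_eq_card_non_zero_eigs


variable {n : ℕ} {X : Matrix (Fin n) (Fin n) ℝ}

noncomputable def sig (d : SVDData n X) (i : Fin n) : ℝ := Real.sqrt (d.μ i)

noncomputable def pv (d : SVDData n X) (i : Fin n) : Fin n → ℝ :=
  (sig d i)⁻¹ • X.mulVec (d.q i)

lemma sig_nonneg (d : SVDData n X) (i : Fin n) : 0 ≤ sig d i := Real.sqrt_nonneg _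

lemma sig_sq (d : SVDData n X) (i : Fin n) : sig d i ^ 2 = d.μ i := Real.sq_sqrt (d.hμ i)

lemma sig_ne_zero (d : SVDData n X) {i : Fin n} (h : d.μ i ≠ 0) : sig d i ≠ 0 := by
  have : 0 < d.μ i := lt_of_le_of_ne (d.hμ i) (Ne.symm h)
  exact ne_of_gt (Real.sqrt_pos.mpr this)

lemma dot_Xq (d : SVDData n X) (i j : Fin n) :
    dotProduct (X.mulVec (d.q i)) (X.mulVec (d.q j)) =
      d.μ j * (if i = j then 1 else 0) := by
  have h1 : dotProduct (d.q i) (X.transpose.mulVec (X.mulVec (d.q j))) =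
      dotProduct (X.mulVec (d.q i)) (X.mulVec (d.q j)) := by
    rw [Matrix.dotProduct_mulVec, Matrix.vecMul_transpose]
  rw [← h1, Matrix.mulVec_mulVec, d.hAq j, dotProduct_smul, d.hq i j, smul_eq_mul]

lemma Xq_eq (d : SVDData n X) (i : Fin n) : X.mulVec (d.q i) = sig d i • pv d i := by
  by_cases h : d.μ i = 0
  · have h0 : dotProduct (X.mulVec (d.q i)) (X.mulVec (d.q i)) = 0 := by
      rw [dot_Xq d i i, h]; simp
    have hz : X.mulVec (d.q i) = 0 := dotProduct_self_eq_zero.mp h0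
    rw [pv, hz]; simp
  · rw [pv, smul_smul, mul_inv_cancel₀ (sig_ne_zero d h), one_smul]

lemma dot_pp (d : SVDData n X) {i j : Fin n} (hi : d.μ i ≠ 0) (hj : d.μ j ≠ 0) :
    dotProduct (pv d i) (pv d j) = if i = j then 1 else 0 := by
  rw [pv, pv, smul_dotProduct, dotProduct_smul, dot_Xq d i j]
  by_cases h : i = j
  · subst h
    simp only [if_pos rfl, smul_eq_mul, mul_one]
    rw [← sig_sq d i]
    have hs := sig_ne_zero d hi
    field_simp [sq]
  · simp [h]

lemma sum_sq_q (d : SVDData n X) (i : Fin n) : ∑ k, (d.q i k) ^ 2 = 1 := by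
  have := d.hq i i
  simp only [if_pos rfl, dotProduct] at this
  simpa [sq] using this

lemma sum_sq_p (d : SVDData n X) {i : Fin n} (hi : d.μ i ≠ 0) : ∑ k, (pv d i k) ^ 2 = 1 := by
  have := dot_pp d hi hi
  simp only [if_pos rfl, dotProduct] at this
  simpa [sq] using this

lemma X_entry (d : SVDData n X) (j k : Fin n) :
    X j k = ∑ i, sig d i * pv d i j * d.q i k := by
  rw [d.hexp j k]
  refine Finset.sum_congr rfl fun i _ => ?_
  rw [Xq_eq d i]
  simp [mul_assoc]

open scoped Classical in
noncomputable def supp (d : SVDData n X) : Finset (Fin n) :=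
  univ.filter (fun i => d.μ i ≠ 0)

lemma mem_supp {d : SVDData n X} {i : Fin n} : i ∈ supp d ↔ d.μ i ≠ 0 := by
  simp [supp]

lemma sig_eq_zero_of_notMem {d : SVDData n X} {i : Fin n} (h : i ∉ supp d) : sig d i = 0 := by
  rw [mem_supp, not_not] at h
  simp [sig, h]

lemma sum3_swap (S : Finset (Fin n)) (f : Fin n → Fin n → Fin n → ℝ) :
    ∑ j, ∑ k, ∑ i ∈ S, f i j k = ∑ i ∈ S, ∑ j, ∑ k, f i j k := by
  rw [show (∑ j, ∑ k, ∑ i ∈ S, f i j k) = ∑ j, ∑ i ∈ S, ∑ k, f i j k from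
    Finset.sum_congr rfl fun j _ => Finset.sum_comm, Finset.sum_comm]

lemma trace_X_good (d : SVDData n X) (W : Matrix (Fin n) (Fin n) ℝ) :
    (X.transpose * W).trace = ∑ i, sig d i * dotProduct (pv d i) (W.mulVec (d.q i)) := by
  rw [trace_eq_sum]
  calc ∑ j, ∑ k, X j k * W j k
      = ∑ j, ∑ k, ∑ i, sig d i * pv d i j * d.q i k * W j k := by
        refine Finset.sum_congr rfl fun j _ => Finset.sum_congr rfl fun k _ => ?_
        rw [X_entry d j k, Finset.sum_mul]
    _ = ∑ i, ∑ j, ∑ k, sig d i * pv d i j * d.q i k * W j k := sum3_swap univ _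
    _ = ∑ i, sig d i * dotProduct (pv d i) (W.mulVec (d.q i)) := by
        refine Finset.sum_congr rfl fun i _ => ?_
        simp only [dotProduct, Matrix.mulVec, Finset.mul_sum]
        refine Finset.sum_congr rfl fun j _ => Finset.sum_congr rfl fun k _ => by ring

noncomputable def U0 (d : SVDData n X) : Matrix (Fin n) (Fin n) ℝ :=
  Matrix.of fun j k => ∑ i ∈ supp d, pv d i j * d.q i k

lemma trace_U0 (d : SVDData n X) (W : Matrix (Fin n) (Fin n) ℝ) :
    ((U0 d).transpose * W).trace =
      ∑ i ∈ supp d, dotProduct (pv d i) (W.mulVec (d.q i)) := by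
  rw [trace_eq_sum]
  calc ∑ j, ∑ k, U0 d j k * W j k
      = ∑ j, ∑ k, ∑ i ∈ supp d, pv d i j * d.q i k * W j k := by
        refine Finset.sum_congr rfl fun j _ => Finset.sum_congr rfl fun k _ => ?_
        rw [show U0 d j k = ∑ i ∈ supp d, pv d i j * d.q i k from rfl, Finset.sum_mul]
    _ = ∑ i ∈ supp d, ∑ j, ∑ k, pv d i j * d.q i k * W j k := sum3_swap _ _
    _ = ∑ i ∈ supp d, dotProduct (pv d i) (W.mulVec (d.q i)) := by
        refine Finset.sum_congr rfl fun i _ => ?_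
        simp only [dotProduct, Matrix.mulVec, Finset.mul_sum]
        refine Finset.sum_congr rfl fun j _ => Finset.sum_congr rfl fun k _ => by ring

lemma U0_mulVec (d : SVDData n X) (v : Fin n → ℝ) (j : Fin n) :
    (U0 d).mulVec v j = ∑ i ∈ supp d, dotProduct (d.q i) v * pv d i j := by
  simp only [Matrix.mulVec, dotProduct, U0, Matrix.of_apply, Finset.sum_mul,
    Finset.mul_sum]
  rw [Finset.sum_comm]
  refine Finset.sum_congr rfl fun i _ => Finset.sum_congr rfl fun k _ => by ring

lemma U0_mulVec_q (d : SVDData n X) {i : Fin n} (hi : i ∈ supp d) :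
    (U0 d).mulVec (d.q i) = pv d i := by
  funext j
  rw [U0_mulVec]
  rw [Finset.sum_eq_single i]
  · rw [d.hq i i]; simp
  · intro b hb hbi
    rw [d.hq b i, if_neg hbi]; simp
  · intro h; exact absurd hi h

lemma opNorm_U0_le (d : SVDData n X) : opNorm (U0 d) ≤ 1 := by
  refine opNorm_le_one fun v hv => ?_
  have key : ∑ j, ((U0 d).mulVec v j) ^ 2 =
      ∑ i ∈ supp d, (dotProduct (d.q i) v) ^ 2 := by
    calc ∑ j, ((U0 d).mulVec v j) ^ 2
        = ∑ j, ∑ i ∈ supp d, ∑ i' ∈ supp d,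
            (dotProduct (d.q i) v * pv d i j) *
            (dotProduct (d.q i') v * pv d i' j) := by
          refine Finset.sum_congr rfl fun j _ => ?_
          rw [U0_mulVec, sq, Finset.sum_mul_sum]
      _ = ∑ i ∈ supp d, ∑ i' ∈ supp d, ∑ j,
            (dotProduct (d.q i) v * pv d i j) *
            (dotProduct (d.q i') v * pv d i' j) := by
          rw [Finset.sum_comm]
          refine Finset.sum_congr rfl fun i _ => Finset.sum_comm
      _ = ∑ i ∈ supp d, ∑ i' ∈ supp d,
            dotProduct (d.q i) v * dotProduct (d.q i') v *
              (if i = i' then (1:ℝ) else 0) := by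
          refine Finset.sum_congr rfl fun i hi => Finset.sum_congr rfl fun i' hi' => ?_
          rw [← dot_pp d (mem_supp.mp hi) (mem_supp.mp hi')]
          have key : ∀ (a b : ℝ) (f g : Fin n → ℝ),
              ∑ j, (a * f j) * (b * g j) = a * b * dotProduct f g := by
            intro a b f g
            simp only [dotProduct, Finset.mul_sum]
            exact Finset.sum_congr rfl fun j _ => by ring
          exact key _ _ _ _
      _ = ∑ i ∈ supp d, (dotProduct (d.q i) v) ^ 2 := by
          refine Finset.sum_congr rfl fun i hi => ?_
          rw [Finset.sum_eq_single i]
          · simp [sq]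
          · intro b _ hbi; rw [if_neg (Ne.symm hbi)]; simp
          · intro h; exact absurd hi h
  rw [key]
  calc ∑ i ∈ supp d, (dotProduct (d.q i) v) ^ 2
      ≤ ∑ i, (dotProduct (d.q i) v) ^ 2 :=
        Finset.sum_le_sum_of_subset_of_nonneg (Finset.subset_univ _)
          (fun i _ _ => sq_nonneg _)
    _ = ∑ i, (v i) ^ 2 := d.hPar v
    _ ≤ 1 := hv

lemma nucNorm_X_eq (d : SVDData n X) : nucNorm X = ∑ i, sig d i := by
  have hub : ∀ W : Matrix (Fin n) (Fin n) ℝ, opNorm W ≤ 1 →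
      (X.transpose * W).trace ≤ ∑ i, sig d i := by
    intro W hW
    rw [trace_X_good d W]
    refine Finset.sum_le_sum fun i _ => ?_
    by_cases hi : d.μ i = 0
    · simp [sig, hi]
    · have h1 : dotProduct (pv d i) (W.mulVec (d.q i)) ≤ 1 :=
        pairing_le_one hW (le_of_eq (sum_sq_p d hi)) (le_of_eq (sum_sq_q d i))
      calc sig d i * dotProduct (pv d i) (W.mulVec (d.q i))
          ≤ sig d i * 1 := mul_le_mul_of_nonneg_left h1 (sig_nonneg d i)
        _ = sig d i := mul_one _
  refine le_antisymm (nucNorm_le X (Finset.sum_nonneg fun i _ => sig_nonneg d i) hub) ?_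
  have hmem := le_nucNorm X (opNorm_U0_le d)
  have heq : (X.transpose * U0 d).trace = ∑ i, sig d i := by
    rw [trace_X_good d (U0 d)]
    rw [show (∑ i, sig d i * dotProduct (pv d i) ((U0 d).mulVec (d.q i)))
        = ∑ i, sig d i * (if d.μ i ≠ 0 then 1 else 0) from ?_]
    · refine Finset.sum_congr rfl fun i _ => ?_
      by_cases hi : d.μ i = 0 <;> simp [sig, hi]
    · refine Finset.sum_congr rfl fun i _ => ?_
      by_cases hi : d.μ i ≠ 0
      · rw [U0_mulVec_q d (mem_supp.mpr hi), dot_pp d hi hi, if_pos rfl, if_pos hi]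
      · rw [if_neg hi]
        push_neg at hi
        simp [sig, hi]
  rwa [heq] at hmem

lemma trace_X_U0 (d : SVDData n X) : (X.transpose * U0 d).trace = nucNorm X := by
  rw [nucNorm_X_eq d, trace_X_good d (U0 d)]
  refine Finset.sum_congr rfl fun i _ => ?_
  by_cases hi : d.μ i ≠ 0
  · rw [U0_mulVec_q d (mem_supp.mpr hi), dot_pp d hi hi, if_pos rfl, mul_one]
  · push_neg at hi; simp [sig, hi]

lemma nucNorm_U0_eq (d : SVDData n X) : nucNorm (U0 d) = (supp d).card := by
  refine le_antisymm ?_ ?_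
  · refine nucNorm_le (U0 d) (by positivity) fun W hW => ?_
    rw [trace_U0 d W]
    calc ∑ i ∈ supp d, dotProduct (pv d i) (W.mulVec (d.q i))
        ≤ ∑ i ∈ supp d, 1 := Finset.sum_le_sum fun i hi =>
          pairing_le_one hW (le_of_eq (sum_sq_p d (mem_supp.mp hi)))
            (le_of_eq (sum_sq_q d i))
      _ = (supp d).card := by simp
  · have h := le_nucNorm (U0 d) (opNorm_U0_le d)
    have heq : ((U0 d).transpose * U0 d).trace = (supp d).card := by
      rw [trace_U0 d (U0 d)]
      rw [show (∑ i ∈ supp d, dotProduct (pv d i) ((U0 d).mulVec (d.q i)))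
          = ∑ i ∈ supp d, (1:ℝ) from ?_]
      · simp
      · refine Finset.sum_congr rfl fun i hi => ?_
        rw [U0_mulVec_q d hi, dot_pp d (mem_supp.mp hi) (mem_supp.mp hi), if_pos rfl]
    rwa [heq] at h

lemma rank_eq_card (d : SVDData n X) : (X.rank : ℝ) = (supp d).card := by
  rw [d.hrank]
  norm_cast
  classical
  rw [Fintype.card_subtype]
  apply Finset.card_bij (fun i _ => i)
  · intro a ha; simpa [supp] using ha
  · intro a b _ _ h; exact h
  · intro b hb; exact ⟨b, by simpa [supp] using hb, rfl⟩

end SVDAux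

open SVDAux in
theorem stmt_15 (n : ℕ) (X : Matrix (Fin n) (Fin n) ℝ) :
    IsLeast {r : ℝ | ∃ U : Matrix (Fin n) (Fin n) ℝ, opNorm U ≤ 1 ∧
        nucNorm X = (X.transpose * U).trace ∧ r = nucNorm U} (X.rank : ℝ) := by
  obtain ⟨d⟩ := exists_svdData n X
  constructor
  · exact ⟨U0 d, opNorm_U0_le d, (trace_X_U0 d).symm, by rw [nucNorm_U0_eq d, rank_eq_card d]⟩
  · rintro r ⟨U, hU, hXU, rfl⟩
    rw [rank_eq_card d]
    -- from the equality, dotProduct (pv d i) (U *ᵥ q i) = 1 for i in supp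
    have hm : ∀ i ∈ supp d, dotProduct (pv d i) (U.mulVec (d.q i)) = 1 := by
      have hsum : ∑ i, sig d i * dotProduct (pv d i) (U.mulVec (d.q i)) =
          ∑ i, sig d i := by
        rw [← trace_X_good d U, ← hXU, nucNorm_X_eq d]
      have hterm : ∀ i ∈ (univ : Finset (Fin n)),
          0 ≤ sig d i - sig d i * dotProduct (pv d i) (U.mulVec (d.q i)) := by
        intro i _
        by_cases hi : d.μ i = 0
        · simp [sig, hi]
        · have h1 : dotProduct (pv d i) (U.mulVec (d.q i)) ≤ 1 :=
            pairing_le_one hU (le_of_eq (sum_sq_p d hi)) (le_of_eq (sum_sq_q d i))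
          nlinarith [sig_nonneg d i]
      have hzero : ∑ i, (sig d i - sig d i * dotProduct (pv d i) (U.mulVec (d.q i)))
          = 0 := by rw [Finset.sum_sub_distrib, hsum, sub_self]
      intro i hi
      have := (Finset.sum_eq_zero_iff_of_nonneg hterm).mp hzero i (Finset.mem_univ i)
      have hs : sig d i ≠ 0 := sig_ne_zero d (mem_supp.mp hi)
      have : sig d i * (1 - dotProduct (pv d i) (U.mulVec (d.q i))) = 0 := by
        linarith [this]
      rcases mul_eq_zero.mp this with h | h
      · exact absurd h hs
      · linarith
    have htr : (U.transpose * U0 d).trace = (supp d).card := by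
      rw [trace_eq_sum]
      have hsymm : ∑ j, ∑ k, U j k * U0 d j k = ((U0 d).transpose * U).trace := by
        rw [trace_eq_sum]
        exact Finset.sum_congr rfl fun j _ => Finset.sum_congr rfl fun k _ => mul_comm _ _
      rw [hsymm, trace_U0 d U]
      rw [Finset.sum_congr rfl hm]
      simp
    have h := le_nucNorm U (opNorm_U0_le d)
    rwa [htr] at h
end

section
/- Let x ∈ ℝⁿ, k a positive integer, and suppose u ∈ ℝⁿ satisfies -1 ≤ u ≤ 1, ‖u‖₁ ≤ k, and ‖x‖₁ = ⟨u, x⟩. Then ‖x‖₀ ≤ k. -/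
open Finset

theorem stmt_16 (n k : ℕ) (hk : 0 < k) (x u : Fin n → ℝ)
    (hu : ∀ i, -1 ≤ u i ∧ u i ≤ 1) (hu1 : (∑ i, |u i|) ≤ (k : ℝ))
    (heq : (∑ i, |x i|) = ∑ i, u i * x i) :
    (Finset.univ.filter fun i => x i ≠ 0).card ≤ k := by
  set S := Finset.univ.filter fun i => x i ≠ 0 with hS
  have hterm : ∀ i ∈ Finset.univ, (0:ℝ) ≤ |x i| - u i * x i := by
    intro i _
    have : u i * x i ≤ |u i| * |x i| := le_trans (le_abs_self _) (by rw [abs_mul])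
    have hle1 : |u i| ≤ 1 := abs_le.2 ⟨(hu i).1, (hu i).2⟩
    nlinarith [abs_nonneg (x i)]
  have hzero : ∀ i ∈ Finset.univ, |x i| - u i * x i = 0 := by
    rw [← Finset.sum_eq_zero_iff_of_nonneg hterm]
    simp [Finset.sum_sub_distrib, heq]
  have hone : ∀ i ∈ S, (1:ℝ) ≤ |u i| := by
    intro i hi
    have hx : x i ≠ 0 := (Finset.mem_filter.1 hi).2
    have h0 := hzero i (Finset.mem_univ i)
    have h1 : |x i| = u i * x i := by linarith
    have h2 : u i * x i ≤ |u i| * |x i| := le_trans (le_abs_self _) (by rw [abs_mul])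
    have hpos : 0 < |x i| := abs_pos.2 hx
    nlinarith
  have hcard : (S.card : ℝ) ≤ ∑ i ∈ S, |u i| := by
    calc (S.card : ℝ) = ∑ i ∈ S, (1:ℝ) := by simp
    _ ≤ ∑ i ∈ S, |u i| := Finset.sum_le_sum hone
  have : (S.card : ℝ) ≤ (k : ℝ) := by
    refine hcard.trans (le_trans ?_ hu1)
    exact Finset.sum_le_sum_of_subset_of_nonneg (Finset.subset_univ S)
      (fun i _ _ => abs_nonneg _)
  exact_mod_cast this
end

section
/- Let x ∈ ℝⁿ, k a positive integer, and suppose v ∈ ℝⁿ satisfies 0 ≤ v ≤ 1, ⟨1, 1 - v⟩ ≤ k, and |x| ⊙ v = 0. Then ‖x‖₀ ≤ k. Conversely, if ‖x‖₀ ≤ k, then there exists such a v (namely v = 1 - sign(|x|)). -/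
open Finset

theorem stmt_17 (n k : ℕ) (hk : 0 < k) (x : Fin n → ℝ) :
    (∀ v : Fin n → ℝ, (∀ i, 0 ≤ v i ∧ v i ≤ 1) →
        (∑ i, (1 - v i)) ≤ (k : ℝ) → (∀ i, |x i| * v i = 0) →
        (Finset.univ.filter fun i => x i ≠ 0).card ≤ k) ∧
    ((Finset.univ.filter fun i => x i ≠ 0).card ≤ k →
        ∃ v : Fin n → ℝ, (∀ i, 0 ≤ v i ∧ v i ≤ 1) ∧
          (∑ i, (1 - v i)) ≤ (k : ℝ) ∧ (∀ i, |x i| * v i = 0) ∧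
          v = fun i => 1 - Real.sign |x i|) := by
  constructor
  · intro v hv hsum hxv
    have key : ((Finset.univ.filter fun i => x i ≠ 0).card : ℝ) ≤ (k : ℝ) := by
      calc ((Finset.univ.filter fun i => x i ≠ 0).card : ℝ)
          = ∑ i ∈ Finset.univ.filter fun i => x i ≠ 0, (1 : ℝ) := by simp
        _ = ∑ i ∈ Finset.univ.filter fun i => x i ≠ 0, (1 - v i) := by
            apply Finset.sum_congr rfl
            intro i hi
            have hx : x i ≠ 0 := (Finset.mem_filter.mp hi).2
            have : v i = 0 := by
              have := hxv i
              rcases mul_eq_zero.mp this with h | h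
              · exact absurd (abs_eq_zero.mp h) hx
              · exact h
            rw [this]; ring
        _ ≤ ∑ i, (1 - v i) := by
            apply Finset.sum_le_sum_of_subset_of_nonneg (Finset.filter_subset _ _)
            intro i _ _
            linarith [(hv i).2]
        _ ≤ (k : ℝ) := hsum
    exact_mod_cast key
  · intro hcard
    refine ⟨fun i => 1 - Real.sign |x i|, ?_, ?_, ?_, rfl⟩
    · intro i
      rcases eq_or_ne (x i) 0 with h | h
      · simp [h]
      · have : Real.sign |x i| = 1 := Real.sign_of_pos (abs_pos.mpr h)
        simp [this]
    · have : (∑ i, (1 - (1 - Real.sign |x i|)))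
          = ∑ i, Real.sign |x i| := by simp
      rw [this]
      have : ∑ i, Real.sign |x i|
          = ∑ i ∈ Finset.univ.filter fun i => x i ≠ 0, (1 : ℝ) := by
        rw [Finset.sum_filter]
        apply Finset.sum_congr rfl
        intro i _
        rcases eq_or_ne (x i) 0 with h | h
        · simp [h]
        · simp [h, Real.sign_of_pos (abs_pos.mpr h)]
      rw [this]
      simp only [Finset.sum_const, nsmul_eq_mul, mul_one]
      exact_mod_cast hcard
    · intro i
      rcases eq_or_ne (x i) 0 with h | h
      · simp [h]
      · simp [Real.sign_of_pos (abs_pos.mpr h)]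
end
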